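/- arXiv:1602.06704 — 7 statements merged into one kernel-verified Lean document; each statement's English description precedes it below -/
import Mathlib

section
/- Let r ≥ 1, let x_1,…,x_r ∈ ℂ with |x_j| < 1 for all j, and let 𝒪 ∈ ℂ with |𝒪| < 1. Then the infinite product over all multipartite indices k⃗ = (k_1,…,k_r) ∈ ℕ^r of the factors (1 − 𝒪 x_1^{k_1} x_2^{k_2} ⋯ x_r^{k_r})^{−1} converges (the family is multipliable, and each factor is nonzero), the series ∑_{m≥1} (𝒪^m/m) ∏_{j=1}^r (1 − x_j^m)^{−1} converges absolutely, and ∏_{k⃗∈ℕ^r} (1 − 𝒪 x_1^{k_1}⋯x_r^{k_r})^{−1} = exp( ∑_{m=1}^∞ (𝒪^m/m) ∏_{j=1}^r (1 − x_j^m)^{−1} ). -/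
/-!
Taking logarithms, `log ∏_k (1 - 𝒪 x^k)⁻¹ = ∑_k ∑_{m ≥ 1} (𝒪 x^k)^m / m`. This double series
converges absolutely, so the two summations may be exchanged, and for fixed `m` the sum over
`k ∈ ℕ^r` is a product of `r` geometric series: `∑_k (x^k)^m = ∏_j (1 - x_j^m)⁻¹`.
-/

open Finset

section FinProd

variable {R β : Type*} [NormedCommRing R]

lemma prod_consEquiv_apply {n : ℕ} (f : Fin (n + 1) → β → R) (p : β × (Fin n → β)) :
    ∏ i, f i (Fin.consEquiv (fun _ => β) p i) = f 0 p.1 * ∏ i, f i.succ (p.2 i) := by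
  simp [Fin.prod_univ_succ, Fin.consEquiv]

theorem summable_norm_fin_prod {n : ℕ} {f : Fin n → β → R}
    (hf : ∀ i, Summable fun b => ‖f i b‖) :
    Summable fun k : Fin n → β => ‖∏ i, f i (k i)‖ := by
  induction n with
  | zero => exact summable_of_hasFiniteSupport (Set.toFinite _)
  | succ n ih =>
    rw [← (Fin.consEquiv fun _ => β).summable_iff]
    simpa only [Function.comp_def, prod_consEquiv_apply] using
      (hf 0).mul_norm (ih fun i => hf i.succ)

theorem hasSum_fin_prod {n : ℕ} {f : Fin n → β → R} {a : Fin n → R}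
    (hf : ∀ i, HasSum (f i) (a i)) (hf' : ∀ i, Summable fun b => ‖f i b‖) :
    HasSum (fun k : Fin n → β => ∏ i, f i (k i)) (∏ i, a i) := by
  induction n with
  | zero => simp
  | succ n ih =>
    rw [← (Fin.consEquiv fun _ => β).hasSum_iff, Fin.prod_univ_succ]
    simp only [Function.comp_def, prod_consEquiv_apply]
    have htail := ih (fun i => hf i.succ) fun i => hf' i.succ
    have hmul := summable_mul_of_summable_norm' (hf' 0) (hf 0).summable
      (summable_norm_fin_prod fun i => hf' i.succ) htail.summable
    exact ((hf 0).mul htail hmul :)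

end FinProd

section Geometric

variable {𝕜 : Type*} [NormedField 𝕜] {n : ℕ} {x : Fin n → 𝕜}

theorem summable_norm_prod_pow (hx : ∀ i, ‖x i‖ < 1) :
    Summable fun k : Fin n → ℕ => ‖∏ i, x i ^ k i‖ :=
  summable_norm_fin_prod fun i => summable_norm_geometric_of_norm_lt_one (hx i)

theorem hasSum_prod_pow (hx : ∀ i, ‖x i‖ < 1) :
    HasSum (fun k : Fin n → ℕ => ∏ i, x i ^ k i) (∏ i, (1 - x i)⁻¹) :=
  hasSum_fin_prod (fun i => hasSum_geometric_of_norm_lt_one (hx i))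
    fun i => summable_norm_geometric_of_norm_lt_one (hx i)

end Geometric

namespace Complex

variable {β : Type*} {w : β → ℂ}

lemma summable_norm_pow_succ_div (hw : Summable fun k => ‖w k‖) (hw1 : ∀ k, ‖w k‖ < 1) :
    Summable fun p : β × ℕ => ‖w p.1 ^ (p.2 + 1) / ((p.2 : ℂ) + 1)‖ := by
  have hlog (k : β) :
      HasSum (fun m : ℕ => ‖w k‖ ^ (m + 1) / (m + 1)) (-Real.log (1 - ‖w k‖)) :=
    Real.hasSum_pow_div_log_of_abs_lt_one (by rw [abs_norm]; exact hw1 k)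
  have hnorm (p : β × ℕ) :
      ‖w p.1 ^ (p.2 + 1) / ((p.2 : ℂ) + 1)‖ = ‖w p.1‖ ^ (p.2 + 1) / (p.2 + 1) := by
    rw [norm_div, norm_pow, ← Nat.cast_succ, norm_natCast, Nat.cast_succ]
  simp_rw [hnorm]
  refine (summable_prod_of_nonneg fun _ => by positivity).2 ⟨fun k => (hlog k).summable, ?_⟩
  simp_rw [(hlog _).tsum_eq, sub_eq_add_neg]
  exact (Real.summable_log_one_add_of_summable hw.neg).neg

lemma summable_norm_tsum_pow_succ_div (hw : Summable fun k => ‖w k‖) (hw1 : ∀ k, ‖w k‖ < 1) :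
    Summable fun m : ℕ => ‖(∑' k, w k ^ (m + 1)) / ((m : ℂ) + 1)‖ := by
  have hF := (summable_norm_pow_succ_div hw hw1).prod_symm
  refine hF.prod.of_nonneg_of_le (fun _ => norm_nonneg _) fun m => ?_
  rw [← tsum_div_const]
  exact norm_tsum_le_tsum_norm (hF.prod_factor m)

lemma tsum_neg_log_one_sub (hw : Summable fun k => ‖w k‖) (hw1 : ∀ k, ‖w k‖ < 1) :
    ∑' k, -log (1 - w k) = ∑' m : ℕ, (∑' k, w k ^ (m + 1)) / ((m : ℂ) + 1) := by
  calc ∑' k, -log (1 - w k) = ∑' (k) (m : ℕ), w k ^ (m + 1) / ((m : ℂ) + 1) :=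
        tsum_congr fun k => (hasSum_taylorSeries_neg_log' (hw1 k)).tsum_eq.symm
    _ = ∑' (m : ℕ) (k), w k ^ (m + 1) / ((m : ℂ) + 1) :=
        (summable_norm_pow_succ_div hw hw1).of_norm.tsum_comm.symm
    _ = _ := by simp_rw [tsum_div_const]

theorem hasProd_inv_one_sub (hw : Summable fun k => ‖w k‖) (hw1 : ∀ k, ‖w k‖ < 1) :
    HasProd (fun k => (1 - w k)⁻¹)
      (exp (∑' m : ℕ, (∑' k, w k ^ (m + 1)) / ((m : ℂ) + 1))) := by
  have hslit (k : β) : 1 - w k ∈ slitPlane := by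
    simpa [sub_eq_add_neg] using mem_slitPlane_of_norm_lt_one (z := -w k) (by simpa using hw1 k)
  have hlog_inv (k : β) : log (1 - w k)⁻¹ = -log (1 - w k) :=
    log_inv _ (slitPlane_arg_ne_pi (hslit k))
  rw [← tsum_neg_log_one_sub hw hw1]
  refine hasProd_of_hasSum_log (fun k => inv_ne_zero (slitPlane_ne_zero (hslit k))) ?_
  simp_rw [hlog_inv]
  exact (summable_log_one_add_of_summable (summable_norm_iff.1 hw).neg).neg.hasSum

end Complex

theorem multipartite_generating_function_F_general
    (r : ℕ) (x : Fin r → ℂ) (hx : ∀ j, ‖x j‖ < 1)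
    (O : ℂ) (hO : ‖O‖ < 1) :
    (Multipliable fun k : Fin r → ℕ => (1 - O * ∏ j, x j ^ k j)⁻¹)
    ∧ (∀ k : Fin r → ℕ, 1 - O * ∏ j, x j ^ k j ≠ 0)
    ∧ (Summable fun m : ℕ =>
        ‖O ^ (m + 1) / ((m : ℂ) + 1) * ∏ j, (1 - x j ^ (m + 1))⁻¹‖)
    ∧ (∏' k : Fin r → ℕ, (1 - O * ∏ j, x j ^ k j)⁻¹
        = Complex.exp
            (∑' m : ℕ, O ^ (m + 1) / ((m : ℂ) + 1) * ∏ j, (1 - x j ^ (m + 1))⁻¹)) := by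
  set w : (Fin r → ℕ) → ℂ := fun k => O * ∏ j, x j ^ k j
  have hw : Summable fun k => ‖w k‖ := by
    simpa only [w, norm_mul] using (summable_norm_prod_pow hx).mul_left ‖O‖
  have hw1 (k : Fin r → ℕ) : ‖w k‖ < 1 := by
    refine lt_of_le_of_lt ?_ hO
    rw [norm_mul, norm_prod]
    refine mul_le_of_le_one_right (norm_nonneg O) (prod_le_one (fun _ _ => norm_nonneg _) ?_)
    exact fun j _ => by rw [norm_pow]; exact pow_le_one₀ (norm_nonneg _) (hx j).le
  have hterm (m : ℕ) : (∑' k, w k ^ (m + 1)) / ((m : ℂ) + 1)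
      = O ^ (m + 1) / ((m : ℂ) + 1) * ∏ j, (1 - x j ^ (m + 1))⁻¹ := by
    have hpow (k : Fin r → ℕ) : w k ^ (m + 1) = O ^ (m + 1) * ∏ j, (x j ^ (m + 1)) ^ k j := by
      simp only [w, mul_pow, ← prod_pow, ← pow_mul, mul_comm]
    have hx' (j : Fin r) : ‖x j ^ (m + 1)‖ < 1 := by
      rw [norm_pow]; exact pow_lt_one₀ (norm_nonneg _) (hx j) m.succ_ne_zero
    rw [tsum_congr hpow, tsum_mul_left, (hasSum_prod_pow hx').tsum_eq, mul_div_right_comm]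
  have hprod := Complex.hasProd_inv_one_sub hw hw1
  simp only [hterm] at hprod
  refine ⟨hprod.multipliable, fun k => ?_, ?_, hprod.tprod_eq⟩
  · intro h
    have h1 : w k = 1 := (sub_eq_zero.1 h).symm
    simpa [h1] using hw1 k
  · simpa only [hterm] using Complex.summable_norm_tsum_pow_succ_div hw hw1

/-- The multipartite generating function identity
`∏_{k⃗∈ℕ^r} (1 − 𝒪 x_1^{k_1}⋯x_r^{k_r})^{−1}
  = exp( ∑_{m=1}^∞ (𝒪^m/m) ∏_{j=1}^r (1 − x_j^m)^{−1} )`,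
together with the asserted convergence statements. -/
theorem multipartite_generating_function_F
    (r : ℕ) (hr : 1 ≤ r) (x : Fin r → ℂ) (hx : ∀ j, ‖x j‖ < 1)
    (O : ℂ) (hO : ‖O‖ < 1) :
    (Multipliable fun k : Fin r → ℕ => (1 - O * ∏ j, x j ^ k j)⁻¹)
    ∧ (∀ k : Fin r → ℕ, 1 - O * ∏ j, x j ^ k j ≠ 0)
    ∧ (Summable fun m : ℕ =>
        ‖O ^ (m + 1) / ((m : ℂ) + 1) * ∏ j, (1 - x j ^ (m + 1))⁻¹‖)
    ∧ (∏' k : Fin r → ℕ, (1 - O * ∏ j, x j ^ k j)⁻¹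
        = Complex.exp
            (∑' m : ℕ, O ^ (m + 1) / ((m : ℂ) + 1) * ∏ j, (1 - x j ^ (m + 1))⁻¹)) :=
  multipartite_generating_function_F_general r x hx O hO
end

section
/- Let r ≥ 1, let x_1,…,x_r ∈ ℂ with |x_j| < 1 for all j, and let 𝒪 ∈ ℂ with |𝒪| < 1. Then the infinite product over all multipartite indices k⃗ = (k_1,…,k_r) ∈ ℕ^r of the factors (1 + 𝒪 x_1^{k_1} x_2^{k_2} ⋯ x_r^{k_r}) converges (the family is multipliable), the series ∑_{m≥1} ((−𝒪)^m/m) ∏_{j=1}^r (1 − x_j^m)^{−1} converges absolutely, and ∏_{k⃗∈ℕ^r} (1 + 𝒪 x_1^{k_1}⋯x_r^{k_r}) = exp( −∑_{m=1}^∞ ((−𝒪)^m/m) ∏_{j=1}^r (1 − x_j^m)^{−1} ). -/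
/-!
Write `a_k = O x₁^{k₁} ⋯ x_r^{k_r}`, so that `∑_k ‖a_k‖ < ∞` and `‖a_k‖ ≤ ‖O‖ < 1`. Expanding
`log (1 + a_k) = -∑_{m ≥ 1} (-a_k)^m / m`, the double series over `(k, m)` converges absolutely,
so the two sums may be swapped; for fixed `m` the sum over `k` is a product of `r` geometric
series, `∑_k (-a_k)^m = (-O)^m ∏_j (1 - x_j^m)⁻¹`. Exponentiating the sum of the logarithms
gives the product.
-/

open Finset

section PiProduct

variable {R : Type*} [NormedCommRing R] {α : Type*}

theorem summable_norm_prod_pi {r : ℕ} (f : Fin r → α → R)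
    (hf : ∀ j, Summable fun n => ‖f j n‖) :
    Summable fun k : Fin r → α => ‖∏ j, f j (k j)‖ := by
  induction r with
  | zero => exact .of_finite
  | succ r ih =>
    rw [← (Fin.consEquiv fun _ => α).summable_iff]
    simpa [Function.comp_def, Fin.prod_univ_succ] using
      (hf 0).mul_norm (ih (fun j => f j.succ) fun j => hf j.succ)

theorem hasSum_prod_pi [CompleteSpace R] {r : ℕ} (f : Fin r → α → R)
    (hf : ∀ j, Summable fun n => ‖f j n‖) :
    HasSum (fun k : Fin r → α => ∏ j, f j (k j)) (∏ j, ∑' n, f j n) := by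
  induction r with
  | zero => simp
  | succ r ih =>
    have htail := summable_norm_prod_pi (fun j => f j.succ) fun j => hf j.succ
    rw [← (Fin.consEquiv fun _ => α).hasSum_iff, Fin.prod_univ_succ]
    simpa [Function.comp_def, Fin.prod_univ_succ] using
      (hf 0).of_norm.hasSum.mul (ih (fun j => f j.succ) fun j => hf j.succ)
        ((hf 0).mul_norm htail).of_norm

end PiProduct

theorem hasSum_prod_pow_pi {K : Type*} [NormedField K] [CompleteSpace K] {r : ℕ}
    (y : Fin r → K) (hy : ∀ j, ‖y j‖ < 1) :
    HasSum (fun k : Fin r → ℕ => ∏ j, y j ^ k j) (∏ j, (1 - y j)⁻¹) := by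
  have h := hasSum_prod_pi (fun j n => y j ^ n) fun j => by
    simpa only [norm_pow] using summable_geometric_of_lt_one (norm_nonneg _) (hy j)
  rwa [prod_congr rfl fun j _ => tsum_geometric_of_norm_lt_one (hy j)] at h

theorem summable_norm_mul_prod_pow {K : Type*} [NormedField K] {r : ℕ} (O : K) (x : Fin r → K)
    (hx : ∀ j, ‖x j‖ < 1) : Summable fun k : Fin r → ℕ => ‖O * ∏ j, x j ^ k j‖ := by
  simpa only [norm_mul] using (summable_norm_prod_pi (fun j n => x j ^ n) fun j => by
    simpa only [norm_pow] using summable_geometric_of_lt_one (norm_nonneg _) (hx j)).mul_left ‖O‖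

theorem norm_mul_prod_pow_le {K : Type*} [NormedField K] {ι : Type*} [Fintype ι]
    (O : K) (x : ι → K) (hx : ∀ j, ‖x j‖ ≤ 1) (k : ι → ℕ) :
    ‖O * ∏ j, x j ^ k j‖ ≤ ‖O‖ := by
  rw [norm_mul, norm_prod]
  refine mul_le_of_le_one_right (norm_nonneg O) (prod_le_one (fun _ _ => norm_nonneg _) ?_)
  exact fun j _ => norm_pow (x j) (k j) ▸ pow_le_one₀ (norm_nonneg _) (hx j)

theorem summable_norm_tsum_of_summable_norm_prod {β γ E : Type*} [NormedAddCommGroup E]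
    [CompleteSpace E] {f : β × γ → E} (h : Summable fun p => ‖f p‖) :
    Summable fun c => ‖∑' b, f (b, c)‖ :=
  h.prod_symm.prod.of_nonneg_of_le (fun _ => norm_nonneg _)
    fun c => norm_tsum_le_tsum_norm (h.prod_symm.prod_factor c)

theorem norm_pow_succ_div_le (z : ℂ) (n : ℕ) : ‖z ^ (n + 1) / ((n : ℂ) + 1)‖ ≤ ‖z‖ ^ (n + 1) := by
  rw [norm_div, norm_pow]
  refine div_le_self (by positivity) ?_
  rw [← Nat.cast_succ, Complex.norm_natCast]
  exact Nat.one_le_cast.2 n.succ_pos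

section LogSeries

variable {ι : Type*} {a : ι → ℂ} {c : ℝ}

theorem summable_prod_norm_pow_succ_div (ha : Summable fun i => ‖a i‖)
    (hac : ∀ i, ‖a i‖ ≤ c) (hc : c < 1) :
    Summable fun p : ι × ℕ => ‖a p.1 ^ (p.2 + 1) / ((p.2 : ℂ) + 1)‖ := by
  rcases isEmpty_or_nonempty ι with _ | ⟨⟨i₀⟩⟩
  · exact .of_finite
  have hc₀ : 0 ≤ c := (norm_nonneg _).trans (hac i₀)
  refine (ha.mul_of_nonneg (summable_geometric_of_lt_one hc₀ hc) (fun _ => norm_nonneg _)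
    fun _ => by positivity).of_nonneg_of_le (fun _ => norm_nonneg _) fun ⟨i, n⟩ => ?_
  calc _ ≤ ‖a i‖ ^ (n + 1) := norm_pow_succ_div_le (a i) n
    _ ≤ ‖a i‖ * c ^ n := by rw [pow_succ']; gcongr; exact hac i

theorem tsum_neg_log_one_sub_eq_tsum_tsum_pow_succ_div (ha : Summable fun i => ‖a i‖)
    (hac : ∀ i, ‖a i‖ ≤ c) (hc : c < 1) :
    ∑' i, -Complex.log (1 - a i) = ∑' (n : ℕ) (i : ι), a i ^ (n + 1) / ((n : ℂ) + 1) := by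
  have hrow (i : ι) := Complex.hasSum_taylorSeries_neg_log' ((hac i).trans_lt hc)
  rw [Summable.tsum_comm (f := fun i (n : ℕ) => a i ^ (n + 1) / ((n : ℂ) + 1))
    (summable_prod_norm_pow_succ_div ha hac hc).of_norm]
  exact tsum_congr fun i => (hrow i).tsum_eq.symm

end LogSeries

theorem hasSum_neg_mul_prod_pow_pow_succ_div {r : ℕ} (x : Fin r → ℂ) (hx : ∀ j, ‖x j‖ < 1)
    (O : ℂ) (n : ℕ) :
    HasSum (fun k : Fin r → ℕ => (-(O * ∏ j, x j ^ k j)) ^ (n + 1) / ((n : ℂ) + 1))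
      ((-O) ^ (n + 1) / ((n : ℂ) + 1) * ∏ j, (1 - x j ^ (n + 1))⁻¹) := by
  have hxn : ∀ j, ‖x j ^ (n + 1)‖ < 1 := fun j =>
    norm_pow (x j) _ ▸ pow_lt_one₀ (norm_nonneg _) (hx j) n.succ_ne_zero
  refine ((hasSum_prod_pow_pi _ hxn).mul_left ((-O) ^ (n + 1) / ((n : ℂ) + 1))).congr_fun
    fun k => ?_
  simp only [← neg_mul, mul_pow, ← prod_pow, ← pow_mul, mul_comm (k _)]
  ring

theorem multipartite_generating_function_G_general
    (r : ℕ) (x : Fin r → ℂ) (hx : ∀ j, ‖x j‖ < 1)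
    (O : ℂ) (hO : ‖O‖ < 1) :
    (Multipliable fun k : Fin r → ℕ => 1 + O * ∏ j, x j ^ k j)
    ∧ (Summable fun m : ℕ =>
        ‖(-O) ^ (m + 1) / ((m : ℂ) + 1) * ∏ j, (1 - x j ^ (m + 1))⁻¹‖)
    ∧ (∏' k : Fin r → ℕ, (1 + O * ∏ j, x j ^ k j)
        = Complex.exp
            (-∑' m : ℕ, (-O) ^ (m + 1) / ((m : ℂ) + 1) * ∏ j, (1 - x j ^ (m + 1))⁻¹)) := by
  have ha : Summable fun k : Fin r → ℕ => ‖-(O * ∏ j, x j ^ k j)‖ := by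
    simpa only [norm_neg] using summable_norm_mul_prod_pow O x hx
  have ha_le (k : Fin r → ℕ) : ‖-(O * ∏ j, x j ^ k j)‖ ≤ ‖O‖ :=
    (norm_neg (O * _)).symm ▸ norm_mul_prod_pow_le O x (fun j => (hx j).le) k
  have hne (k : Fin r → ℕ) : 1 + O * ∏ j, x j ^ k j ≠ 0 := fun h => by
    have := (ha_le k).trans_lt hO
    rw [eq_neg_of_add_eq_zero_right h, neg_neg, norm_one] at this
    exact lt_irrefl _ this
  have hcol := hasSum_neg_mul_prod_pow_pow_succ_div x hx O
  have hsum := (summable_norm_mul_prod_pow O x hx).of_norm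
  refine ⟨Complex.multipliable_one_add_of_summable hsum, ?_, ?_⟩
  · simpa only [(hcol _).tsum_eq] using
      summable_norm_tsum_of_summable_norm_prod (summable_prod_norm_pow_succ_div ha ha_le hO)
  rw [← Complex.cexp_tsum_eq_tprod hne (Complex.summable_log_one_add_of_summable hsum),
    ← tsum_congr fun m => (hcol m).tsum_eq,
    ← tsum_neg_log_one_sub_eq_tsum_tsum_pow_succ_div ha ha_le hO]
  simp only [sub_neg_eq_add, tsum_neg, neg_neg]

/-- The multipartite generating function identity
`∏_{k⃗∈ℕ^r} (1 + 𝒪 x_1^{k_1}⋯x_r^{k_r})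
  = exp( −∑_{m=1}^∞ ((−𝒪)^m/m) ∏_{j=1}^r (1 − x_j^m)^{−1} )`,
together with the asserted convergence statements. -/
theorem multipartite_generating_function_G
    (r : ℕ) (hr : 1 ≤ r) (x : Fin r → ℂ) (hx : ∀ j, ‖x j‖ < 1)
    (O : ℂ) (hO : ‖O‖ < 1) :
    (Multipliable fun k : Fin r → ℕ => 1 + O * ∏ j, x j ^ k j)
    ∧ (Summable fun m : ℕ =>
        ‖(-O) ^ (m + 1) / ((m : ℂ) + 1) * ∏ j, (1 - x j ^ (m + 1))⁻¹‖)
    ∧ (∏' k : Fin r → ℕ, (1 + O * ∏ j, x j ^ k j)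
        = Complex.exp
            (-∑' m : ℕ, (-O) ^ (m + 1) / ((m : ℂ) + 1) * ∏ j, (1 - x j ^ (m + 1))⁻¹)) :=
  multipartite_generating_function_G_general r x hx O hO
end

section
/- Let α > 0 and β ∈ ℝ. For every s ∈ ℂ, the family indexed by (k_1,k_2) ∈ ℕ × ℕ of factors ( 1 − e^{iβ k_1} e^{−iβ k_2} e^{−(k_1+k_2+s)α} ) is multipliable, so the Patterson–Selberg zeta function Z_{Γ}(s) = ∏_{k_1,k_2 ≥ 0} ( 1 − e^{iβ k_1} e^{−iβ k_2} e^{−(k_1+k_2+s)α} ) is well defined for all s ∈ ℂ, and the resulting function Z_{Γ} : ℂ → ℂ is analytic on all of ℂ (entire). -/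
/-!
Each factor is `1 - e^{-αs} λ^{k₁} μ^{k₂}` with `λ = e^{iβ-α}`, `μ = e^{-iβ-α}` of modulus
`e^{-α} < 1`, so `Z_Γ(s) = F(-e^{-αs})` where `F(w) = ∏ (1 + w λ^{k₁} μ^{k₂})`. Since the
coefficients `λ^{k₁} μ^{k₂}` are absolutely summable, this product converges locally uniformly
in `w`, hence `F` is entire.
-/

open Complex

noncomputable def ZPS (α β : ℝ) (s : ℂ) : ℂ :=
  ∏' k : ℕ × ℕ,
    (1 - Complex.exp (Complex.I * β * k.1) * Complex.exp (-(Complex.I * β * k.2)) *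
        Complex.exp (-((k.1 : ℂ) + (k.2 : ℂ) + s) * α))

theorem differentiable_tprod_one_add_mul {ι : Type*} {a : ι → ℂ}
    (ha : Summable fun i ↦ ‖a i‖) : Differentiable ℂ fun w ↦ ∏' i, (1 + w * a i) := by
  intro w
  set R := ‖w‖ + 1
  have hprod : HasProdLocallyUniformlyOn (fun i w ↦ 1 + w * a i)
      (fun w ↦ ∏' i, (1 + w * a i)) (Metric.ball 0 R) := by
    refine (ha.mul_left R).hasProdLocallyUniformlyOn_one_add Metric.isOpen_ball
      (.of_forall fun i x hx ↦ ?_) fun i ↦ by fun_prop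
    rw [norm_mul]
    exact mul_le_mul_of_nonneg_right (mem_ball_zero_iff.mp hx).le (norm_nonneg _)
  have hdiff := hprod.differentiableOn (.of_forall fun t ↦ by
    simpa [Finset.prod_fn] using DifferentiableOn.finsetProd fun i _ ↦ by fun_prop)
    Metric.isOpen_ball
  exact hdiff.differentiableAt (Metric.isOpen_ball.mem_nhds (by simp [R]))

lemma summable_norm_pow_mul_pow {z w : ℂ} (hz : ‖z‖ < 1) (hw : ‖w‖ < 1) :
    Summable fun k : ℕ × ℕ ↦ ‖z ^ k.1 * w ^ k.2‖ := by
  simp only [norm_mul, norm_pow]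
  exact (summable_geometric_of_lt_one (norm_nonneg _) hz).mul_of_nonneg
    (summable_geometric_of_lt_one (norm_nonneg _) hw) (fun _ ↦ by positivity) fun _ ↦ by positivity

lemma norm_exp_sub_ofReal_lt_one {a : ℝ} {b : ℂ} (hb : b.re < a) : ‖exp (b - a)‖ < 1 := by
  rw [norm_exp, Real.exp_lt_one_iff, sub_re, ofReal_re]
  linarith

lemma ZPS_factor_eq (α β : ℝ) (s : ℂ) (k : ℕ × ℕ) :
    1 - exp (I * β * k.1) * exp (-(I * β * k.2)) * exp (-((k.1 : ℂ) + (k.2 : ℂ) + s) * α) =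
      1 + -exp (-(s * α)) * (exp (I * β - α) ^ k.1 * exp (-(I * β) - α) ^ k.2) := by
  rw [sub_eq_add_neg, neg_mul (exp _), ← exp_nat_mul, ← exp_nat_mul, ← exp_add, ← exp_add,
    ← exp_add, ← exp_add]
  ring_nf

/-- For `α > 0`, the defining product of the Patterson–Selberg zeta function is
multipliable for every `s ∈ ℂ`, and the resulting function is entire. -/
theorem ZPS_multipliable_and_entire (α β : ℝ) (hα : 0 < α) :
    (∀ s : ℂ, Multipliable fun k : ℕ × ℕ =>
        1 - Complex.exp (Complex.I * β * k.1) * Complex.exp (-(Complex.I * β * k.2)) *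
          Complex.exp (-((k.1 : ℂ) + (k.2 : ℂ) + s) * α))
    ∧ (∀ s : ℂ, AnalyticAt ℂ (ZPS α β) s) := by
  set q : ℕ × ℕ → ℂ := fun k ↦ exp (I * β - α) ^ k.1 * exp (-(I * β) - α) ^ k.2
  have hq : Summable fun k ↦ ‖q k‖ :=
    summable_norm_pow_mul_pow (norm_exp_sub_ofReal_lt_one (by simpa using hα))
      (norm_exp_sub_ofReal_lt_one (by simpa using hα))
  have hZ : ZPS α β = (fun w ↦ ∏' k, (1 + w * q k)) ∘ fun s ↦ -exp (-(s * α)) := by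
    funext s
    simp only [ZPS, ZPS_factor_eq, Function.comp, q]
  refine ⟨fun s ↦ ?_, fun s ↦ ?_⟩
  · simp_rw [ZPS_factor_eq α β s]
    exact multipliable_one_add_of_summable
      (by simpa only [norm_mul, q] using hq.mul_left ‖-exp (-(s * α))‖)
  · rw [hZ]
    exact ((differentiable_tprod_one_add_mul hq).comp (by fun_prop)).analyticAt s
end

section
/- Let α > 0 and β ∈ ℝ, and let s ∈ ℂ with Re s > 0. Then the series ∑_{n=1}^∞ e^{−nα(s−1)} / ( n·[ sinh²(αn/2) + sin²(βn/2) ] ) converges absolutely, and the Patterson–Selberg zeta function satisfies log Z_{Γ}(s) = −(1/4) ∑_{n=1}^∞ e^{−nα(s−1)} / ( n·[ sinh²(αn/2) + sin²(βn/2) ] ); equivalently Z_{Γ}(s) = exp( −(1/4) ∑_{n=1}^∞ e^{−nα(s−1)} / ( n·[ sinh²(αn/2) + sin²(βn/2) ] ) ). -/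
open Complex

noncomputable def psDenom (α β : ℝ) (n : ℕ) : ℂ :=
  ((n : ℝ) * ((Real.sinh (α * n / 2)) ^ 2 + (Real.sin (β * n / 2)) ^ 2) : ℝ)

section GeometricProd

variable {K : Type*} [NormedField K] {a b : K}

lemma summable_norm_geometric_mul_geometric (ha : ‖a‖ < 1) (hb : ‖b‖ < 1) (c : K) :
    Summable fun k : ℕ × ℕ ↦ ‖a ^ k.1 * b ^ k.2 * c‖ := by
  simpa only [norm_mul] using
    ((summable_norm_geometric_of_norm_lt_one ha).mul_norm
      (summable_norm_geometric_of_norm_lt_one hb)).mul_right ‖c‖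

lemma norm_geometric_mul_geometric_le (ha : ‖a‖ ≤ 1) (hb : ‖b‖ ≤ 1) (c : K) (k : ℕ × ℕ) :
    ‖a ^ k.1 * b ^ k.2 * c‖ ≤ ‖c‖ := by
  rw [norm_mul, norm_mul, norm_pow, norm_pow]
  exact mul_le_of_le_one_left (norm_nonneg c) (mul_le_one₀ (pow_le_one₀ (norm_nonneg a) ha)
    (by positivity) (pow_le_one₀ (norm_nonneg b) hb))

lemma hasSum_pow_geometric_mul_geometric [CompleteSpace K] (ha : ‖a‖ < 1) (hb : ‖b‖ < 1) (c : K)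
    {m : ℕ} (hm : m ≠ 0) :
    HasSum (fun k : ℕ × ℕ ↦ (a ^ k.1 * b ^ k.2 * c) ^ m)
      ((1 - a ^ m)⁻¹ * (1 - b ^ m)⁻¹ * c ^ m) := by
  have ham : ‖a ^ m‖ < 1 := by rw [norm_pow]; exact pow_lt_one₀ (norm_nonneg a) ha hm
  have hbm : ‖b ^ m‖ < 1 := by rw [norm_pow]; exact pow_lt_one₀ (norm_nonneg b) hb hm
  have hpow : (fun k : ℕ × ℕ ↦ (a ^ k.1 * b ^ k.2 * c) ^ m)
      = fun k ↦ (a ^ m) ^ k.1 * (b ^ m) ^ k.2 * c ^ m := funext fun k ↦ by ring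
  rw [hpow]
  exact ((hasSum_geometric_of_norm_lt_one ham).mul (hasSum_geometric_of_norm_lt_one hbm)
    (summable_mul_of_summable_norm (summable_norm_geometric_of_norm_lt_one ham)
      (summable_norm_geometric_of_norm_lt_one hbm))).mul_right (c ^ m)

end GeometricProd

section LogProduct

variable {ι : Type*} {z : ι → ℂ} {r : ℝ}

lemma summable_pow_succ_div_of_norm_le (hr₀ : 0 ≤ r) (hr : r < 1) (hz : ∀ k, ‖z k‖ ≤ r)
    (hs : Summable fun k ↦ ‖z k‖) :
    Summable fun p : ℕ × ι ↦ z p.2 ^ (p.1 + 1) / (p.1 + 1) := by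
  refine Summable.of_norm_bounded
    ((summable_geometric_of_lt_one hr₀ hr).mul_of_nonneg hs (fun _ ↦ by positivity)
      fun _ ↦ norm_nonneg _) fun ⟨n, k⟩ ↦ ?_
  calc ‖z k ^ (n + 1) / (n + 1)‖ ≤ ‖z k‖ ^ n * ‖z k‖ := by
        rw [norm_div, norm_pow, pow_succ]
        exact div_le_self (by positivity) (by norm_cast; simp)
    _ ≤ r ^ n * ‖z k‖ := by gcongr; exact hz k

lemma hasSum_log_one_sub_of_norm_le (hr₀ : 0 ≤ r) (hr : r < 1) (hz : ∀ k, ‖z k‖ ≤ r)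
    (hs : Summable fun k ↦ ‖z k‖) :
    HasSum (fun k ↦ log (1 - z k)) (-∑' n : ℕ, (∑' k, z k ^ (n + 1)) / (n + 1)) := by
  have hF := summable_pow_succ_div_of_norm_le hr₀ hr hz hs
  have hlog (k : ι) : log (1 - z k) = -∑' n : ℕ, z k ^ (n + 1) / (n + 1) := by
    rw [(hasSum_taylorSeries_neg_log' ((hz k).trans_lt hr)).tsum_eq, neg_neg]
  simp only [hlog, ← tsum_div_const]
  rw [← Summable.tsum_comm (f := fun (n : ℕ) k ↦ z k ^ (n + 1) / (n + 1)) hF]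
  exact hF.prod_symm.prod.hasSum.neg

lemma hasProd_one_sub_of_norm_le (hr₀ : 0 ≤ r) (hr : r < 1) (hz : ∀ k, ‖z k‖ ≤ r)
    (hs : Summable fun k ↦ ‖z k‖) :
    HasProd (fun k ↦ 1 - z k) (cexp (-∑' n : ℕ, (∑' k, z k ^ (n + 1)) / (n + 1))) := by
  refine hasProd_of_hasSum_log (fun k ↦ sub_ne_zero.mpr fun h ↦ ?_)
    (hasSum_log_one_sub_of_norm_le hr₀ hr hz hs)
  simpa [← h] using (hz k).trans_lt hr

end LogProduct

lemma one_sub_exp_mul_one_sub_exp (x y : ℂ) :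
    (1 - cexp (-x + y * I)) * (1 - cexp (-x - y * I))
      = cexp (-x) * (4 * (sinh (x / 2) ^ 2 + sin (y / 2) ^ 2)) := by
  set u := cexp (x / 2)
  set e := cexp (y / 2 * I)
  have hu : u ≠ 0 := exp_ne_zero _
  have he : e ≠ 0 := exp_ne_zero _
  have h1 : cexp (-x + y * I) = e ^ 2 / u ^ 2 := by
    rw [← exp_nat_mul, ← exp_nat_mul, ← exp_sub]; ring_nf
  have h2 : cexp (-x - y * I) = 1 / (e ^ 2 * u ^ 2) := by
    rw [← exp_nat_mul, ← exp_nat_mul, ← exp_add, one_div, ← exp_neg]; ring_nf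
  have h3 : cexp (-x) = 1 / u ^ 2 := by
    rw [← exp_nat_mul, one_div, ← exp_neg]; ring_nf
  have hsinh : sinh (x / 2) = (u - u⁻¹) / 2 := by rw [sinh, ← exp_neg]
  have hsin : sin (y / 2) = (e⁻¹ - e) * I / 2 := by rw [sin, neg_mul, exp_neg]
  rw [h1, h2, h3, hsinh, hsin]
  field_simp
  linear_combination (-4 * u ^ 2 * (e ^ 2 - 1) ^ 2) * I_sq

lemma ZPS_eq_tprod (α β : ℝ) (s : ℂ) :
    ZPS α β s = ∏' k : ℕ × ℕ,
      (1 - cexp (-α + β * I) ^ k.1 * cexp (-α - β * I) ^ k.2 * cexp (-(s * α))) := by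
  refine tprod_congr fun k ↦ ?_
  rw [← exp_nat_mul, ← exp_nat_mul, ← exp_add, ← exp_add, ← exp_add, ← exp_add]
  ring_nf

lemma norm_exp_neg_add_mul_I_lt_one {α : ℝ} (hα : 0 < α) (β : ℝ) : ‖cexp (-α + β * I)‖ < 1 := by
  simpa [norm_exp] using hα

lemma norm_exp_neg_sub_mul_I_lt_one {α : ℝ} (hα : 0 < α) (β : ℝ) : ‖cexp (-α - β * I)‖ < 1 := by
  simpa [norm_exp] using hα

lemma tsum_pow_succ_div_eq_exp_div_psDenom {α : ℝ} (hα : 0 < α) (β : ℝ) (s : ℂ) (n : ℕ) :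
    (∑' k : ℕ × ℕ, (cexp (-α + β * I) ^ k.1 * cexp (-α - β * I) ^ k.2 * cexp (-(s * α))) ^ (n + 1))
        / (n + 1)
      = 1 / 4 * (cexp (-((n : ℂ) + 1) * α * (s - 1)) / psDenom α β (n + 1)) := by
  rw [(hasSum_pow_geometric_mul_geometric (norm_exp_neg_add_mul_I_lt_one hα β)
    (norm_exp_neg_sub_mul_I_lt_one hα β) _ n.add_one_ne_zero).tsum_eq, ← mul_inv,
    ← exp_nat_mul, ← exp_nat_mul, ← exp_nat_mul]
  set D := sinh (α * (n + 1) / 2) ^ 2 + sin (β * (n + 1) / 2) ^ 2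
  have hprod : (1 - cexp ((n + 1) * (-α + β * I))) * (1 - cexp ((n + 1) * (-α - β * I)))
      = (cexp (α * (n + 1)))⁻¹ * (4 * D) := by
    rw [← exp_neg, ← one_sub_exp_mul_one_sub_exp]
    ring_nf
  have hexp : cexp (-((n : ℂ) + 1) * α * (s - 1))
      = cexp ((n + 1) * -(s * α)) * cexp (α * (n + 1)) := by
    rw [← exp_add]
    ring_nf
  have hD : psDenom α β (n + 1) = (n + 1) * D := by simp [psDenom, D]
  push_cast
  rw [hprod, hexp, hD]
  simp only [div_eq_mul_inv, mul_inv, inv_inv]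
  ring

/-- For `Re s > 0`, the series `∑_{n≥1} e^{−nα(s−1)}/(n(sinh²(αn/2)+sin²(βn/2)))`
converges absolutely and
`Z_Γ(s) = exp(−(1/4) ∑_{n≥1} e^{−nα(s−1)}/(n(sinh²(αn/2)+sin²(βn/2))))`. -/
theorem ZPS_log_formula (α β : ℝ) (hα : 0 < α) (s : ℂ) (hs : 0 < s.re) :
    (Summable fun n : ℕ =>
      ‖Complex.exp (-((n : ℂ) + 1) * (α : ℂ) * (s - 1)) / psDenom α β (n + 1)‖)
    ∧ ZPS α β s
        = Complex.exp (-(1 / 4) *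
            ∑' n : ℕ, Complex.exp (-((n : ℂ) + 1) * (α : ℂ) * (s - 1)) / psDenom α β (n + 1)) := by
  have ha := norm_exp_neg_add_mul_I_lt_one hα β
  have hb := norm_exp_neg_sub_mul_I_lt_one hα β
  have hc : ‖cexp (-(s * α))‖ < 1 := by simpa [norm_exp] using mul_pos hs hα
  have hz := norm_geometric_mul_geometric_le ha.le hb.le (cexp (-(s * α)))
  have hsum := summable_norm_geometric_mul_geometric ha hb (cexp (-(s * α)))
  have hterm := tsum_pow_succ_div_eq_exp_div_psDenom hα β s
  refine ⟨?_, ?_⟩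
  · refine summable_norm_iff.mpr (((summable_pow_succ_div_of_norm_le (norm_nonneg _) hc hz
      hsum).prod.mul_left 4).congr fun n ↦ ?_)
    dsimp only
    rw [tsum_div_const, hterm]
    ring
  · rw [ZPS_eq_tprod, (hasProd_one_sub_of_norm_le (norm_nonneg _) hc hz hsum).tprod_eq,
      tsum_congr hterm, tsum_mul_left]
    congr 1
    ring
end

section
/- Let α > 0 and β ∈ ℝ. A complex number s is a zero of the Patterson–Selberg zeta function Z_{Γ} (i.e. Z_{Γ}(s) = 0) if and only if there exist k_1, k_2 ∈ ℕ and n ∈ ℤ such that s = −(k_1 + k_2) + i(k_1 − k_2)·(β/α) + 2πin/α. -/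
/-!
For `α > 0` the factors of `Z_Γ(s)` are `1 - q_k` with
`q_k = e^{-sα} (e^{iβ-α})^{k₁} (e^{-iβ-α})^{k₂}`, a double geometric sequence with ratios of
modulus `e^{-α} < 1`. Hence `∑ ‖q_k‖ < ∞`, the product converges absolutely, and it vanishes
exactly when one factor does. Finally `q_k = e^{(z_k - s)α}` with
`z_k = -(k₁+k₂) + i(k₁-k₂)β/α`, which equals `1` iff `(z_k - s)α ∈ 2πiℤ`.
-/

open Complex

theorem tprod_one_sub_eq_zero_iff {ι R : Type*} [NormedCommRing R] [NormOneClass R]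
    [CompleteSpace R] [NormMulClass R] {f : ι → R} (hf : Summable (‖f ·‖)) :
    ∏' i, (1 - f i) = 0 ↔ ∃ i, f i = 1 := by
  refine ⟨fun h ↦ ?_, fun ⟨i, hi⟩ ↦ tprod_of_exists_eq_zero ⟨i, sub_eq_zero.mpr hi.symm⟩⟩
  by_contra! hne
  refine tprod_one_add_ne_zero_of_summable (f := (-f ·)) (fun i ↦ ?_) (by simpa using hf) ?_
  · simpa [← sub_eq_add_neg, sub_eq_zero] using (hne i).symm
  · simpa [← sub_eq_add_neg] using h

theorem Complex.exp_sub_mul_eq_one_iff {a : ℂ} (ha : a ≠ 0) (z s : ℂ) :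
    exp ((z - s) * a) = 1 ↔ ∃ n : ℤ, s = z + 2 * Real.pi * I * n / a := by
  rw [exp_eq_one_iff, (Equiv.neg ℤ).exists_congr_left]
  refine exists_congr fun n ↦ ?_
  simp only [Equiv.neg_symm, Equiv.neg_apply, Int.cast_neg]
  constructor <;> intro h
  · field_simp
    linear_combination -h
  · rw [h]
    field_simp
    ring

section ZPSFactor

variable (β : ℝ) (s : ℂ) (m n : ℕ)

theorem ZPS_factor_eq_mul_pow (α : ℝ) :
    exp (I * β * m) * exp (-(I * β * n)) * exp (-((m : ℂ) + n + s) * α) =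
      exp (-(s * α)) * (exp (I * β - α) ^ m * exp (-(I * β) - α) ^ n) := by
  simp only [← exp_nat_mul, ← exp_add]
  ring_nf

theorem ZPS_factor_eq_exp {α : ℝ} (hα : (α : ℂ) ≠ 0) :
    exp (I * β * m) * exp (-(I * β * n)) * exp (-((m : ℂ) + n + s) * α) =
      exp ((-((m : ℂ) + n) + I * (m - n) * (β / α) - s) * α) := by
  simp only [← exp_add]
  congr 1
  field_simp
  ring

theorem summable_norm_ZPS_factor {α : ℝ} (hα : 0 < α) :
    Summable fun k : ℕ × ℕ ↦
      ‖exp (I * β * k.1) * exp (-(I * β * k.2)) * exp (-((k.1 : ℂ) + k.2 + s) * α)‖ := by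
  have hq : ∀ b : ℝ, ‖exp (I * b - α)‖ < 1 := fun b ↦ by
    simpa [norm_exp] using hα
  simp only [ZPS_factor_eq_mul_pow, norm_mul (exp _)]
  exact ((summable_norm_geometric_of_norm_lt_one (hq β)).mul_norm
    (summable_norm_geometric_of_norm_lt_one (by simpa using hq (-β)))).mul_left _

end ZPSFactor

/-- The zeros of the Patterson–Selberg zeta function are precisely the complex numbers
`s = −(k₁+k₂) + i(k₁−k₂)β/α + 2πin/α` with `k₁, k₂ ∈ ℕ`, `n ∈ ℤ`. -/
theorem ZPS_zero_iff (α β : ℝ) (hα : 0 < α) (s : ℂ) :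
    ZPS α β s = 0 ↔
      ∃ k₁ k₂ : ℕ, ∃ n : ℤ,
        s = -((k₁ : ℂ) + (k₂ : ℂ)) + Complex.I * ((k₁ : ℂ) - (k₂ : ℂ)) * ((β : ℂ) / (α : ℂ))
            + 2 * (Real.pi : ℂ) * Complex.I * (n : ℂ) / (α : ℂ) := by
  have hα' : (α : ℂ) ≠ 0 := ofReal_ne_zero.mpr hα.ne'
  rw [ZPS, tprod_one_sub_eq_zero_iff (summable_norm_ZPS_factor β s hα)]
  simp only [ZPS_factor_eq_exp β s _ _ hα', exp_sub_mul_eq_one_iff hα', Prod.exists]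
end

section
/- Let α > 0 and β ∈ ℝ. Then there exist constants C_1, C_2 > 0 such that for all s ∈ ℂ, |Z_{Γ}(s)| ≤ C_1 · exp( C_2 |s|³ ); in particular the Patterson–Selberg zeta function Z_{Γ} is an entire function of order at most three. -/
open Complex

/-!
With `q = e^{-α}` and `ρ = e^{α|s|}`, the factor of index `(k₁, k₂)` has norm at most
`1 + ρ q^{k₁+k₂}`, so `log |Z_Γ(s)| ≤ ∑ log (1 + ρ q^{k₁+k₂})`. For `N = ⌈|s|⌉` we have
`ρ q^N ≤ 1`: the terms with `k₁ + k₂ < N` are at most `log (1 + ρ) ≤ 1 + α|s|`, and the others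
are at most `ρ q^{k₁+k₂} ≤ q^{(k₁-N)⁺} q^{(k₂-N)⁺}`. Every term is therefore dominated by
`(1 + log (1 + ρ)) q^{(k₁-N)⁺} q^{(k₂-N)⁺}`, whose double sum factors as
`(1 + log (1 + ρ)) (N + (1-q)⁻¹)² = O((1 + |s|)³)`.
-/

theorem norm_tprod_le_exp_tsum {ι E : Type*} [SeminormedCommRing E] [NormMulClass E]
    [NormOneClass E] {f : ι → E} {g : ι → ℝ} (hg : Summable g) (hg₀ : ∀ i, 0 ≤ g i)
    (hfg : ∀ i, ‖f i‖ ≤ Real.exp (g i)) : ‖∏' i, f i‖ ≤ Real.exp (∑' i, g i) := by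
  by_cases hf : Multipliable f
  · rw [hf.norm_tprod]
    exact le_of_tendsto_of_tendsto' hf.norm.hasProd hg.hasSum.rexp fun s ↦
      Finset.prod_le_prod (fun i _ ↦ norm_nonneg _) fun i _ ↦ hfg i
  · rw [tprod_eq_one_of_not_multipliable hf, norm_one]
    exact Real.one_le_exp (tsum_nonneg hg₀)

theorem log_one_add_le_one_add_log {ρ : ℝ} (hρ : 1 ≤ ρ) :
    Real.log (1 + ρ) ≤ 1 + Real.log ρ := by
  have htwo : 2 ≤ Real.exp 1 := by linarith [Real.add_one_le_exp (1 : ℝ)]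
  calc Real.log (1 + ρ) ≤ Real.log (Real.exp 1 * ρ) :=
        Real.log_le_log (by positivity) (by nlinarith)
    _ = 1 + Real.log ρ := by
        rw [Real.log_mul (Real.exp_pos 1).ne' (by positivity), Real.log_exp]

section Geometric

variable {q : ℝ}

theorem summable_pow_tsub (hq₀ : 0 ≤ q) (hq₁ : q < 1) (N : ℕ) :
    Summable fun j : ℕ ↦ q ^ (j - N) :=
  (summable_nat_add_iff N).1 (by simpa using summable_geometric_of_lt_one hq₀ hq₁)

theorem tsum_pow_tsub (hq₀ : 0 ≤ q) (hq₁ : q < 1) (N : ℕ) :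
    ∑' j : ℕ, q ^ (j - N) = N + (1 - q)⁻¹ := by
  rw [← (summable_pow_tsub hq₀ hq₁ N).sum_add_tsum_nat_add N,
    Finset.sum_congr rfl fun j hj ↦ by rw [Nat.sub_eq_zero_of_le (Finset.mem_range.1 hj).le]]
  simp [tsum_geometric_of_lt_one hq₀ hq₁]

theorem summable_pow_tsub_mul_pow_tsub (hq₀ : 0 ≤ q) (hq₁ : q < 1) (N : ℕ) :
    Summable fun k : ℕ × ℕ ↦ q ^ (k.1 - N) * q ^ (k.2 - N) :=
  (summable_pow_tsub hq₀ hq₁ N).mul_of_nonneg (summable_pow_tsub hq₀ hq₁ N)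
    (fun _ ↦ pow_nonneg hq₀ _) fun _ ↦ pow_nonneg hq₀ _

theorem tsum_pow_tsub_mul_pow_tsub (hq₀ : 0 ≤ q) (hq₁ : q < 1) (N : ℕ) :
    ∑' k : ℕ × ℕ, q ^ (k.1 - N) * q ^ (k.2 - N) = (N + (1 - q)⁻¹) ^ 2 := by
  have h := summable_pow_tsub hq₀ hq₁ N
  rw [← h.tsum_mul_tsum h (summable_pow_tsub_mul_pow_tsub hq₀ hq₁ N), tsum_pow_tsub hq₀ hq₁,
    sq]

end Geometric

section LogSum

variable {q ρ : ℝ} {N : ℕ}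

theorem log_one_add_mul_pow_le (hq₀ : 0 ≤ q) (hq₁ : q ≤ 1) (hρ : 0 ≤ ρ)
    (hN : ρ * q ^ N ≤ 1) (a b : ℕ) :
    Real.log (1 + ρ * q ^ (a + b)) ≤ (1 + Real.log (1 + ρ)) * (q ^ (a - N) * q ^ (b - N)) := by
  have hlog₀ : 0 ≤ Real.log (1 + ρ) := Real.log_nonneg (by linarith)
  rcases lt_or_ge (a + b) N with hab | hab
  · rw [Nat.sub_eq_zero_of_le (by omega : a ≤ N), Nat.sub_eq_zero_of_le (by omega : b ≤ N)]
    have hle : ρ * q ^ (a + b) ≤ ρ := mul_le_of_le_one_right hρ (pow_le_one₀ hq₀ hq₁)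
    calc Real.log (1 + ρ * q ^ (a + b)) ≤ Real.log (1 + ρ) :=
          Real.log_le_log (by positivity) (by linarith)
      _ ≤ (1 + Real.log (1 + ρ)) * (q ^ 0 * q ^ 0) := by simp
  · calc Real.log (1 + ρ * q ^ (a + b)) ≤ ρ * q ^ (a + b) := by
          linarith [Real.log_le_sub_one_of_pos (x := 1 + ρ * q ^ (a + b)) (by positivity)]
      _ = ρ * q ^ N * q ^ (a + b - N) := by rw [mul_assoc, ← pow_add, Nat.add_sub_cancel' hab]
      _ ≤ q ^ (a + b - N) := mul_le_of_le_one_left (pow_nonneg hq₀ _) hN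
      _ ≤ q ^ ((a - N) + (b - N)) := pow_le_pow_of_le_one hq₀ hq₁ (by omega)
      _ ≤ (1 + Real.log (1 + ρ)) * (q ^ (a - N) * q ^ (b - N)) := by
          rw [pow_add]; exact le_mul_of_one_le_left (by positivity) (by linarith)

theorem summable_log_one_add_mul_pow (hq₀ : 0 ≤ q) (hq₁ : q < 1) :
    Summable fun k : ℕ × ℕ ↦ Real.log (1 + ρ * q ^ (k.1 + k.2)) := by
  simpa [pow_add, mul_assoc] using Real.summable_log_one_add_of_summable
    ((summable_pow_tsub_mul_pow_tsub hq₀ hq₁ 0).mul_left ρ)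

theorem tsum_log_one_add_mul_pow_le (hq₀ : 0 ≤ q) (hq₁ : q < 1) (hρ : 0 ≤ ρ)
    (hN : ρ * q ^ N ≤ 1) :
    ∑' k : ℕ × ℕ, Real.log (1 + ρ * q ^ (k.1 + k.2)) ≤
      (1 + Real.log (1 + ρ)) * (N + (1 - q)⁻¹) ^ 2 := by
  rw [← tsum_pow_tsub_mul_pow_tsub hq₀ hq₁ N, ← tsum_mul_left]
  exact (summable_log_one_add_mul_pow hq₀ hq₁).tsum_le_tsum
    (fun k ↦ log_one_add_mul_pow_le hq₀ hq₁.le hρ hN k.1 k.2)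
    ((summable_pow_tsub_mul_pow_tsub hq₀ hq₁ N).mul_left _)

end LogSum

theorem one_add_log_one_add_exp_mul_sq_le {α t A : ℝ} (hα : 0 ≤ α) (ht : 0 ≤ t) (hA : 0 ≤ A) :
    (1 + Real.log (1 + Real.exp (α * t))) * (⌈t⌉₊ + A) ^ 2 ≤
      4 * (2 + α) * (1 + A) ^ 2 * (1 + t ^ 3) := by
  have hlog : 1 + Real.log (1 + Real.exp (α * t)) ≤ (2 + α) * (1 + t) := by
    have h := log_one_add_le_one_add_log (Real.one_le_exp (mul_nonneg hα ht))
    rw [Real.log_exp] at h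
    nlinarith
  have hceil : (⌈t⌉₊ + A : ℝ) ≤ (1 + A) * (1 + t) := by
    nlinarith [Nat.ceil_lt_add_one ht]
  have hcube : (1 + t) ^ 3 ≤ 4 * (1 + t ^ 3) := by
    nlinarith [mul_nonneg (sq_nonneg (1 - t)) (by linarith : 0 ≤ 1 + t)]
  calc (1 + Real.log (1 + Real.exp (α * t))) * (⌈t⌉₊ + A) ^ 2
      ≤ (2 + α) * (1 + t) * ((1 + A) * (1 + t)) ^ 2 :=
        mul_le_mul hlog (pow_le_pow_left₀ (by positivity) hceil 2) (by positivity)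
          (by positivity)
    _ = (2 + α) * (1 + A) ^ 2 * (1 + t) ^ 3 := by ring
    _ ≤ (2 + α) * (1 + A) ^ 2 * (4 * (1 + t ^ 3)) := by gcongr
    _ = 4 * (2 + α) * (1 + A) ^ 2 * (1 + t ^ 3) := by ring

theorem norm_ZPS_factor_le {α : ℝ} (hα : 0 ≤ α) (β : ℝ) (s : ℂ) (a b : ℕ) :
    ‖1 - Complex.exp (Complex.I * β * a) * Complex.exp (-(Complex.I * β * b)) *
        Complex.exp (-((a : ℂ) + (b : ℂ) + s) * α)‖ ≤
      1 + Real.exp (α * ‖s‖) * Real.exp (-α) ^ (a + b) := by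
  refine (norm_sub_le _ _).trans (add_le_add (by rw [norm_one]) ?_)
  have hre : (-((a : ℂ) + (b : ℂ) + s) * α).re = (a + b : ℕ) * -α + -s.re * α := by
    push_cast; simp only [neg_mul, neg_re, mul_re, add_re, natCast_re, ofReal_re, add_im,
      natCast_im, ofReal_im, mul_zero, sub_zero]; ring
  have hs : -s.re * α ≤ α * ‖s‖ := by
    nlinarith [(neg_le_abs s.re).trans (Complex.abs_re_le_norm s)]
  have hexp : Real.exp ((a + b : ℕ) * -α + -s.re * α) ≤
      Real.exp (α * ‖s‖) * Real.exp (-α) ^ (a + b) := by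
    rw [← Real.exp_nat_mul, ← Real.exp_add]
    exact Real.exp_le_exp.2 (by linarith)
  have hphase₁ : ‖Complex.exp (Complex.I * β * a)‖ = 1 := by simp [Complex.norm_exp]
  have hphase₂ : ‖Complex.exp (-(Complex.I * β * b))‖ = 1 := by simp [Complex.norm_exp]
  rw [norm_mul, norm_mul, hphase₁, hphase₂, one_mul, one_mul, Complex.norm_exp, hre]
  exact hexp

/-- Growth estimate: there are constants `C₁, C₂ > 0` with
`|Z_Γ(s)| ≤ C₁ exp(C₂ |s|³)` for all `s ∈ ℂ`; i.e. `Z_Γ` has order at most three. -/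
theorem ZPS_growth_estimate (α β : ℝ) (hα : 0 < α) :
    ∃ C₁ C₂ : ℝ, 0 < C₁ ∧ 0 < C₂ ∧
      ∀ s : ℂ, ‖ZPS α β s‖ ≤ C₁ * Real.exp (C₂ * ‖s‖ ^ 3) := by
  set q := Real.exp (-α)
  have hq₀ : 0 ≤ q := (Real.exp_pos _).le
  have hq₁ : q < 1 := Real.exp_lt_one_iff.2 (neg_lt_zero.2 hα)
  set K := 4 * (2 + α) * (1 + (1 - q)⁻¹) ^ 2
  have hq : 0 < 1 - q := sub_pos.2 hq₁
  have hK : 0 < K := by positivity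
  refine ⟨Real.exp K, K, Real.exp_pos K, hK, fun s ↦ ?_⟩
  set ρ := Real.exp (α * ‖s‖)
  have hN : ρ * q ^ ⌈‖s‖⌉₊ ≤ 1 := by
    rw [← Real.exp_nat_mul, ← Real.exp_add, Real.exp_le_one_iff]
    nlinarith [Nat.le_ceil ‖s‖]
  calc ‖ZPS α β s‖ ≤ Real.exp (∑' k : ℕ × ℕ, Real.log (1 + ρ * q ^ (k.1 + k.2))) :=
        norm_tprod_le_exp_tsum (summable_log_one_add_mul_pow hq₀ hq₁)
          (fun k ↦ Real.log_nonneg (le_add_of_nonneg_right (by positivity)))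
          fun k ↦ by rw [Real.exp_log (by positivity)]; exact norm_ZPS_factor_le hα.le β s k.1 k.2
    _ ≤ Real.exp (K * (1 + ‖s‖ ^ 3)) := Real.exp_le_exp.2 <|
        (tsum_log_one_add_mul_pow_le hq₀ hq₁ (Real.exp_pos _).le hN).trans <|
          one_add_log_one_add_exp_mul_sq_le hα.le (norm_nonneg s) (inv_nonneg.2 hq.le)
    _ = Real.exp K * Real.exp (K * ‖s‖ ^ 3) := by rw [mul_one_add, Real.exp_add]
end

section
/- (Jacobi–Trudi identity, bialternant form.) Let n ≥ 1, let x_1,…,x_n be elements of a commutative ring, and let λ = (λ_1 ≥ λ_2 ≥ ⋯ ≥ λ_n ≥ 0) be a partition with at most n parts. Then det( (x_i^{λ_j + n − j})_{1≤i,j≤n} ) = det( (x_i^{n−j})_{1≤i,j≤n} ) · det( (h_{λ_i − i + j}(x_1,…,x_n))_{1≤i,j≤n} ), where h_m is the complete homogeneous symmetric polynomial of degree m in x_1,…,x_n, with the conventions h_0 = 1 and h_m = 0 for m < 0. (Equivalently, the Schur function satisfies s_λ = det(h_{λ_i−i+j}) after dividing by the Vandermonde determinant.) -/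
open Finset

/-- Complete homogeneous symmetric polynomial `h_d` in the variables `z i`, `i : ι`. -/
noncomputable def hsymm {R : Type*} [CommRing R] {ι : Type*} [Fintype ι] [DecidableEq ι]
    (z : ι → R) (d : ℕ) : R :=
  ∑ t ∈ (Finset.univ : Finset ι).sym d, ((Sym.toMultiset t).map z).prod

/-- `h_m` extended to integer indices, with `h_m = 0` for `m < 0`. -/
noncomputable def hsymmInt {R : Type*} [CommRing R] {ι : Type*} [Fintype ι] [DecidableEq ι]
    (z : ι → R) (m : ℤ) : R :=
  if m < 0 then 0 else hsymm z m.toNat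

/-!
The generating series `∑ₘ hₘ(x) tᵐ` is inverse to `∏ᵢ (1 - xᵢ t)`, so multiplying it by
`∏_{i ≠ k} (1 - xᵢ t)` leaves `1 / (1 - x_k t)`: with `c_{k,s}` the coefficients of that product,
`∑ₛ c_{k,s} h_{m-s} = x_kᵐ`. Read with `m = λᵢ + n - 1 - i`, this says that the Jacobi–Trudi matrix
times the matrix `(c_{k,n-1-j})_{j,k}` is the transposed alternant, for every `λ`. For `λ = 0` the
Jacobi–Trudi matrix is unitriangular, so the second factor has the Vandermonde determinant.

Instead of power series, polynomials act on `ℤ`-indexed sequences through the shift, and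
`∏_{a ∈ A} (1 - x_a t) · h(A ∪ B) = h(B)` follows by induction on `A` from the recurrence
`hₘ(A ∪ {a}) = hₘ(A) + x_a hₘ₋₁(A ∪ {a})`.
-/

open Polynomial

section CompleteHomogeneous

variable {R : Type*} [CommRing R] {ι : Type*} [DecidableEq ι] (z : ι → R)

noncomputable def hsymmOn (A : Finset ι) (d : ℕ) : R :=
  ∑ t ∈ A.sym d, ((Sym.toMultiset t).map z).prod

noncomputable def hsymmOnInt (A : Finset ι) (m : ℤ) : R :=
  if m < 0 then 0 else hsymmOn z A m.toNat

lemma hsymmInt_eq_hsymmOnInt [Fintype ι] : hsymmInt z = hsymmOnInt z univ := rfl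

@[simp]
lemma hsymmOnInt_natCast (A : Finset ι) (d : ℕ) : hsymmOnInt z A d = hsymmOn z A d := by
  simp [hsymmOnInt]

lemma hsymmOn_zero (A : Finset ι) : hsymmOn z A 0 = 1 := by
  rw [hsymmOn, sym_zero, sum_singleton]
  rfl

lemma hsymmOn_singleton (a : ι) (d : ℕ) : hsymmOn z {a} d = z a ^ d := by
  simp [hsymmOn, sym_singleton, Sym.coe_replicate]

lemma hsymmOn_insert {a : ι} {A : Finset ι} (h : a ∉ A) (d : ℕ) :
    hsymmOn z (insert a A) d = ∑ i ∈ range (d + 1), z a ^ i * hsymmOn z A (d - i) := by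
  rw [hsymmOn, ← sum_coe_sort, ← (symInsertEquiv h).symm.sum_comp, ← univ_sigma_univ,
    sum_sigma, ← Fin.sum_univ_eq_sum_range (fun i => z a ^ i * hsymmOn z A (d - i))]
  refine sum_congr rfl fun i _ => ?_
  rw [hsymmOn, mul_sum, ← sum_coe_sort (A.sym (d - i))]
  refine sum_congr rfl fun t _ => ?_
  have hfill : Sym.toMultiset ((symInsertEquiv h).symm ⟨i, t⟩ : Sym ι d)
      = Sym.toMultiset (t : Sym ι (d - i)) + Multiset.replicate i a := by
    simp [symInsertEquiv, Sym.coe_fill, Sym.coe_replicate]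
  rw [hfill, Multiset.map_add, Multiset.prod_add, Multiset.map_replicate,
    Multiset.prod_replicate, mul_comm]

lemma hsymmOn_insert_succ {a : ι} {A : Finset ι} (h : a ∉ A) (d : ℕ) :
    hsymmOn z (insert a A) (d + 1) = hsymmOn z A (d + 1) + z a * hsymmOn z (insert a A) d := by
  rw [hsymmOn_insert z h, hsymmOn_insert z h, sum_range_succ', mul_sum, add_comm]
  simp [pow_succ', mul_assoc]

lemma hsymmOnInt_insert {a : ι} {A : Finset ι} (h : a ∉ A) (m : ℤ) :
    hsymmOnInt z (insert a A) m = hsymmOnInt z A m + z a * hsymmOnInt z (insert a A) (m - 1) := by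
  rcases lt_or_ge m 0 with hm | hm
  · simp [hsymmOnInt, hm, show m - 1 < 0 by omega]
  obtain ⟨d, rfl⟩ := Int.eq_ofNat_of_zero_le hm
  cases d with
  | zero => simp [hsymmOnInt, hsymmOn_zero]
  | succ d =>
    rw [show ((d + 1 : ℕ) : ℤ) - 1 = d by omega, hsymmOnInt_natCast, hsymmOnInt_natCast,
      hsymmOnInt_natCast]
    exact hsymmOn_insert_succ z h d

end CompleteHomogeneous

section Shift

variable {R : Type*} [CommRing R]

noncomputable def seqShift : Module.End R (ℤ → R) :=
  LinearMap.funLeft R R (· - 1)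

lemma seqShift_pow_apply (i : ℕ) (f : ℤ → R) (m : ℤ) : (seqShift ^ i) f m = f (m - i) := by
  induction i generalizing m with
  | zero => simp
  | succ i ih =>
    rw [pow_succ', Module.End.mul_apply, seqShift, LinearMap.funLeft_apply, ← seqShift, ih]
    congr 1
    push_cast
    ring

lemma aeval_seqShift_apply {p : R[X]} {N : ℕ} (hp : p.natDegree < N) (f : ℤ → R) (m : ℤ) :
    aeval seqShift p f m = ∑ s ∈ range N, p.coeff s * f (m - s) := by
  simp [aeval_eq_sum_range' hp, LinearMap.sum_apply, Finset.sum_apply, seqShift_pow_apply]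

end Shift

section ShiftAction

variable {R : Type*} [CommRing R] {ι : Type*} [DecidableEq ι] (z : ι → R)

lemma aeval_one_sub_X_hsymmOnInt {a : ι} {A : Finset ι} (h : a ∉ A) :
    aeval seqShift (1 - C (z a) * X) (hsymmOnInt z (insert a A)) = hsymmOnInt z A := by
  ext m
  rw [aeval_seqShift_apply (N := 2) (by compute_degree!)]
  simp [sum_range_succ, hsymmOnInt_insert z h m, coeff_one]

lemma aeval_prod_hsymmOnInt_union {A B : Finset ι} (hAB : Disjoint A B) :
    aeval seqShift (∏ a ∈ A, (1 - C (z a) * X)) (hsymmOnInt z (A ∪ B)) = hsymmOnInt z B := by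
  induction A using Finset.induction_on with
  | empty => simp
  | @insert a A ha ih =>
    rw [disjoint_insert_left] at hAB
    rw [prod_insert ha, mul_comm, map_mul, Module.End.mul_apply, insert_union,
      aeval_one_sub_X_hsymmOnInt z (fun h => (mem_union.1 h).elim ha hAB.1), ih hAB.2]

end ShiftAction

section Matrix

variable {R : Type*} [CommRing R] {n : ℕ} (x : Fin n → R)

noncomputable def alternant (l : Fin n → ℕ) : Matrix (Fin n) (Fin n) R :=
  Matrix.of fun i j => x i ^ (l j + (n - 1 - j))

noncomputable def jacobiTrudiMatrix (l : Fin n → ℕ) : Matrix (Fin n) (Fin n) R :=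
  Matrix.of fun i j => hsymmInt x ((l i : ℤ) - i + j)

/-- Its `s`-th coefficient is `(-1)^s e_s` of the variables other than `x k`. -/
noncomputable def elemGenErase (k : Fin n) : R[X] :=
  ∏ i ∈ univ.erase k, (1 - C (x i) * X)

lemma natDegree_elemGenErase_lt (k : Fin n) : (elemGenErase x k).natDegree < n := by
  calc (elemGenErase x k).natDegree
      ≤ ∑ i ∈ univ.erase k, (1 - C (x i) * X : R[X]).natDegree := natDegree_prod_le _ _
    _ ≤ ∑ _i ∈ univ.erase k, 1 := sum_le_sum fun i _ => by compute_degree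
    _ < n := by simp [card_erase_of_mem, k.pos]

lemma sum_coeff_elemGenErase_mul_hsymmInt (k : Fin n) (m : ℕ) :
    ∑ s ∈ range n, (elemGenErase x k).coeff s * hsymmInt x (m - s) = x k ^ m := by
  have key : aeval seqShift (elemGenErase x k) (hsymmOnInt x (univ.erase k ∪ {k}))
      = hsymmOnInt x {k} :=
    aeval_prod_hsymmOnInt_union x (disjoint_singleton_right.2 (notMem_erase k univ))
  rw [show univ.erase k ∪ {k} = univ by simp, ← hsymmInt_eq_hsymmOnInt] at key
  have := congrFun key m
  rw [aeval_seqShift_apply (natDegree_elemGenErase_lt x k)] at this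
  rwa [hsymmOnInt_natCast, hsymmOn_singleton] at this

/-- Its `s`-th coefficient is `(-1)^s e_s` of the variables other than `x k`. -/
noncomputable def elemGenEraseMatrix : Matrix (Fin n) (Fin n) R :=
  Matrix.of fun j k => (elemGenErase x k).coeff (n - 1 - j)

lemma jacobiTrudiMatrix_mul_elemGenEraseMatrix (l : Fin n → ℕ) :
    jacobiTrudiMatrix x l * elemGenEraseMatrix x = (alternant x l).transpose := by
  ext i k
  rw [Matrix.mul_apply, ← Equiv.sum_comp Fin.revPerm]
  simp only [jacobiTrudiMatrix, elemGenEraseMatrix, alternant, Matrix.of_apply,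
    Matrix.transpose_apply, Fin.revPerm_apply, Fin.val_rev]
  rw [← sum_coeff_elemGenErase_mul_hsymmInt, ← Fin.sum_univ_eq_sum_range]
  refine sum_congr rfl fun s _ => ?_
  have hs := s.isLt
  have hi := i.isLt
  rw [mul_comm, show n - 1 - (n - (s + 1)) = s by omega]
  congr 2
  omega

lemma det_alternant (l : Fin n → ℕ) :
    (alternant x l).det = (jacobiTrudiMatrix x l).det * (elemGenEraseMatrix x).det := by
  rw [← Matrix.det_mul, jacobiTrudiMatrix_mul_elemGenEraseMatrix, Matrix.det_transpose]

lemma det_jacobiTrudiMatrix_zero : (jacobiTrudiMatrix x 0).det = 1 := by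
  have htri : (jacobiTrudiMatrix x 0).BlockTriangular id := fun i j (hij : j < i) => by
    simp [jacobiTrudiMatrix, hsymmInt, not_le.2 hij]
  rw [Matrix.det_of_isUpperTriangular htri]
  refine prod_eq_one fun i _ => ?_
  simp [jacobiTrudiMatrix, hsymmInt_eq_hsymmOnInt, hsymmOnInt, hsymmOn_zero]

end Matrix

theorem jacobi_trudi_general
    (R : Type*) [CommRing R] (n : ℕ) (x : Fin n → R)
    (l : Fin n → ℕ) :
    Matrix.det (Matrix.of fun i j : Fin n => x i ^ (l j + (n - 1 - (j : ℕ))))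
      = Matrix.det (Matrix.of fun i j : Fin n => x i ^ (n - 1 - (j : ℕ)))
        * Matrix.det (Matrix.of fun i j : Fin n =>
            hsymmInt x ((l i : ℤ) - ((i : ℕ) : ℤ) + ((j : ℕ) : ℤ))) := by
  have hvandermonde : alternant x 0 = Matrix.of fun i j : Fin n => x i ^ (n - 1 - (j : ℕ)) := by
    ext
    simp [alternant]
  rw [← hvandermonde]
  change (alternant x l).det = (alternant x 0).det * (jacobiTrudiMatrix x l).det
  rw [det_alternant, det_alternant x 0, det_jacobiTrudiMatrix_zero, one_mul, mul_comm]

/-- Jacobi–Trudi identity in bialternant form: for a partition `λ` with at most `n` parts,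
`det(x_i^{λ_j+n−j}) = det(x_i^{n−j}) · det(h_{λ_i−i+j}(x))`. -/
theorem jacobi_trudi
    (R : Type*) [CommRing R] (n : ℕ) (hn : 1 ≤ n) (x : Fin n → R)
    (l : Fin n → ℕ) (hl : Antitone l) :
    Matrix.det (Matrix.of fun i j : Fin n => x i ^ (l j + (n - 1 - (j : ℕ))))
      = Matrix.det (Matrix.of fun i j : Fin n => x i ^ (n - 1 - (j : ℕ)))
        * Matrix.det (Matrix.of fun i j : Fin n =>
            hsymmInt x ((l i : ℤ) - ((i : ℕ) : ℤ) + ((j : ℕ) : ℤ))) :=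
  jacobi_trudi_general R n x l
end
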